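/- If φ: F → F' is an injective group homomorphism between free groups and the Strengthened Hanna Neumann inequality holds for the subgroups φ(U), φ(V) of F', and moreover every double coset of φ(V)\F'/φ(U) intersecting φ(F) comes from a double coset of V\F/U, then ∑_{x∈T} χ₀(U ∩ x⁻¹Vx) ≤ χ₀(U)χ₀(V) for U, V ≤ F. -/

import Mathlib

open scoped Classical

/-- The reduced rank `χ₀(H) = max(0, rank H − 1)` of a subgroup (0 if not f.g.). -/
noncomputable def chi0 {G : Type*} [Group G] (H : Subgroup G) : ℕ :=
  if h : Group.FG H then @Group.rank H _ h - 1 else 0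

/-- The conjugate subgroup `x⁻¹ H x`. -/
def conjSubgroup {G : Type*} [Group G] (x : G) (H : Subgroup G) : Subgroup G :=
  H.map (MulAut.conj x⁻¹).toMonoidHom

/-- The Strengthened Hanna Neumann inequality for the pair `U, V`. -/
noncomputable def SHNIneq {G : Type*} [Group G] (U V : Subgroup G) : Prop :=
  ∀ T : Finset G, (∀ x ∈ T, ∀ y ∈ T, DoubleCoset.mk V U x = DoubleCoset.mk V U y → x = y) →
    ∑ x ∈ T, chi0 (U ⊓ conjSubgroup x V) ≤ chi0 U * chi0 V

/-! An injective homomorphism preserves reduced ranks and intersections with conjugates, so a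
transversal of `V\G/U` maps to a family in `H` which is a partial transversal of
`φ(V)\H/φ(U)` by the double coset hypothesis; the inequality for `φ(U), φ(V)` then applies
to it term by term. -/

section

variable {G H : Type*} [Group G] [Group H]

lemma chi0_congr {K : Subgroup G} {L : Subgroup H} (e : K ≃* L) : chi0 K = chi0 L := by
  unfold chi0
  by_cases hK : Group.FG K
  · have hL : Group.FG L := Group.fg_of_surjective (f := e.toMonoidHom) e.surjective
    rw [dif_pos hK, dif_pos hL, Group.rank_congr e]
  · have hL : ¬ Group.FG L := fun hL =>
      hK (Group.fg_of_surjective (f := e.symm.toMonoidHom) e.symm.surjective)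
    rw [dif_neg hK, dif_neg hL]

lemma chi0_map_of_injective {φ : G →* H} (hφ : Function.Injective φ) (K : Subgroup G) :
    chi0 (K.map φ) = chi0 K :=
  (chi0_congr (K.equivMapOfInjective φ hφ)).symm

lemma map_conjSubgroup (φ : G →* H) (x : G) (V : Subgroup G) :
    (conjSubgroup x V).map φ = conjSubgroup (φ x) (V.map φ) := by
  simp only [conjSubgroup, Subgroup.map_map]
  congr 1
  ext v
  simp [MulAut.conj]

lemma chi0_inf_conjSubgroup_map {φ : G →* H} (hφ : Function.Injective φ)
    (U V : Subgroup G) (x : G) :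
    chi0 (U.map φ ⊓ conjSubgroup (φ x) (V.map φ)) = chi0 (U ⊓ conjSubgroup x V) := by
  rw [← map_conjSubgroup, ← Subgroup.map_inf _ _ φ hφ, chi0_map_of_injective hφ]

lemma SHNIneq.of_map {φ : G →* H} (hφ : Function.Injective φ) {U V : Subgroup G}
    (hSHN : SHNIneq (U.map φ) (V.map φ))
    (hcosets : ∀ x y : G,
      DoubleCoset.mk (V.map φ) (U.map φ) (φ x) = DoubleCoset.mk (V.map φ) (U.map φ) (φ y) →
        DoubleCoset.mk V U x = DoubleCoset.mk V U y) :
    SHNIneq U V := by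
  intro T hT
  have hT' : ∀ a ∈ T.image φ, ∀ b ∈ T.image φ, DoubleCoset.mk (V.map φ) (U.map φ) a =
      DoubleCoset.mk (V.map φ) (U.map φ) b → a = b := by
    simp only [Finset.mem_image]
    rintro _ ⟨x, hx, rfl⟩ _ ⟨y, hy, rfl⟩ hxy
    exact congrArg φ (hT x hx y hy (hcosets x y hxy))
  calc ∑ x ∈ T, chi0 (U ⊓ conjSubgroup x V)
      = ∑ a ∈ T.image φ, chi0 (U.map φ ⊓ conjSubgroup a (V.map φ)) := by
        rw [Finset.sum_image fun x _ y _ h => hφ h]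
        exact Finset.sum_congr rfl fun x _ => (chi0_inf_conjSubgroup_map hφ U V x).symm
    _ ≤ chi0 (U.map φ) * chi0 (V.map φ) := hSHN _ hT'
    _ = chi0 U * chi0 V := by rw [chi0_map_of_injective hφ, chi0_map_of_injective hφ]

end

theorem shn_pullback_general (α β : Type) (φ : FreeGroup α →* FreeGroup β)
    (hφ : Function.Injective φ)
    (U V : Subgroup (FreeGroup α))
    (hSHN : SHNIneq (U.map φ) (V.map φ))
    (hcosets : ∀ x y : FreeGroup α,
      DoubleCoset.mk (V.map φ) (U.map φ) (φ x) = DoubleCoset.mk (V.map φ) (U.map φ) (φ y) →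
        DoubleCoset.mk V U x = DoubleCoset.mk V U y) :
    SHNIneq U V :=
  SHNIneq.of_map hφ hSHN hcosets

/-- If `φ : F → F'` is injective between free groups, the Strengthened Hanna Neumann
inequality holds for `φ(U), φ(V)` in `F'`, and every double coset of
`φ(V)\F'/φ(U)` meeting `φ(F)` comes from a double coset of `V\F/U`, then the
inequality holds for `U, V` in `F`. -/
theorem shn_pullback (α β : Type) (φ : FreeGroup α →* FreeGroup β)
    (hφ : Function.Injective φ)
    (U V : Subgroup (FreeGroup α)) (hU : Group.FG U) (hV : Group.FG V)
    (hSHN : SHNIneq (U.map φ) (V.map φ))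
    (hcosets : ∀ x y : FreeGroup α,
      DoubleCoset.mk (V.map φ) (U.map φ) (φ x) = DoubleCoset.mk (V.map φ) (U.map φ) (φ y) →
        DoubleCoset.mk V U x = DoubleCoset.mk V U y) :
    SHNIneq U V :=
  shn_pullback_general α β φ hφ U V hSHN hcosets
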